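/- arXiv:2605.16398 — 2 statements merged into one kernel-verified Lean document; each statement's English description precedes it below -/
import Mathlib

section
/- Let P, Q be probability measures, λ ∈ (0,1], Q_λ := (1−λ)Q + λP, g : X → [0,∞) measurable with Z := ∫ g dP ∈ (0,∞) and M₂ := ∫ g² dP < ∞. Let Π(dx) = g(x)P(dx)/Z. Then the chi-square divergence satisfies χ²(Π‖Q_λ) ≤ M₂/(λZ²) − 1. -/
open MeasureTheory ENNReal

/-- Chi-square bound for the defensive mixture proposal:
`χ²(Π‖Q_λ) ≤ M₂/(λ Z²) − 1` where `Π = g·P/Z`, `Q_λ = (1−λ)Q + λP`. -/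
theorem chi_square_defensive_bound {X : Type*} [MeasurableSpace X]
    (P Q : Measure X) [IsProbabilityMeasure P] [IsProbabilityMeasure Q]
    (l : ℝ) (hl0 : 0 < l) (hl1 : l ≤ 1)
    (g : X → ℝ≥0∞) (hg : Measurable g)
    (Z M₂ : ℝ≥0∞) (hZ : Z = ∫⁻ x, g x ∂P) (hZ0 : 0 < Z) (hZtop : Z < ⊤)
    (hM₂ : M₂ = ∫⁻ x, (g x) ^ 2 ∂P) (hM₂top : M₂ < ⊤) :
    (∫⁻ x, ((Z⁻¹ • (P.withDensity g)).rnDeriv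
        ((ENNReal.ofReal (1 - l)) • Q + (ENNReal.ofReal l) • P) x) ^ 2
        ∂((ENNReal.ofReal (1 - l)) • Q + (ENNReal.ofReal l) • P)) - 1
      ≤ M₂ / (ENNReal.ofReal l * Z ^ 2) - 1 := by
  set a : ℝ≥0∞ := ENNReal.ofReal (1 - l) with ha
  set b : ℝ≥0∞ := ENNReal.ofReal l with hb
  set Ql : Measure X := a • Q + b • P with hQl
  have hb0 : b ≠ 0 := by simp [hb, ENNReal.ofReal_eq_zero, not_le, hl0]
  have hbtop : b ≠ ⊤ := ENNReal.ofReal_ne_top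
  have hatop : a ≠ ⊤ := ENNReal.ofReal_ne_top
  -- Ql is a finite measure
  haveI : IsFiniteMeasure Ql := by
    constructor
    simp only [hQl, Measure.add_apply, Measure.smul_apply, smul_eq_mul,
      measure_univ, mul_one]
    exact ENNReal.add_lt_top.mpr ⟨hatop.lt_top, hbtop.lt_top⟩
  haveI : IsFiniteMeasure (P.withDensity g) :=
    isFiniteMeasure_withDensity (by rw [← hZ]; exact hZtop.ne)
  have hle : b • P ≤ Ql := by rw [hQl]; exact Measure.le_add_left le_rfl
  have hPQl : P ≪ Ql := by
    intro s hs
    have h1 : (b • P) s = 0 := le_antisymm (hs ▸ hle s) zero_le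
    simpa [hb0] using h1
  -- bound on r := P.rnDeriv Ql
  have hr_le : ∀ᵐ x ∂Ql, P.rnDeriv Ql x ≤ b⁻¹ := by
    have h1 : (b • P).rnDeriv Ql ≤ᵐ[Ql] 1 := Measure.rnDeriv_le_one_of_le hle
    have h2 : (b • P).rnDeriv Ql =ᵐ[Ql] b • P.rnDeriv Ql :=
      Measure.rnDeriv_smul_left_of_ne_top P Ql hbtop
    filter_upwards [h1, h2] with x h1 h2
    have hb_mul : b * P.rnDeriv Ql x ≤ 1 := by
      have := h2 ▸ h1; simpa using this
    calc P.rnDeriv Ql x = b⁻¹ * (b * P.rnDeriv Ql x) := by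
          rw [← mul_assoc, ENNReal.inv_mul_cancel hb0 hbtop, one_mul]
      _ ≤ b⁻¹ * 1 := by gcongr
      _ = b⁻¹ := mul_one _
  -- identify the rnDeriv of Π
  have hg_ne_top : ∀ᵐ x ∂P, g x ≠ ∞ := by
    have := ae_lt_top hg (show ∫⁻ x, g x ∂P ≠ ∞ by rw [← hZ]; exact hZtop.ne)
    filter_upwards [this] with x hx using hx.ne
  have hwd : (P.withDensity g).rnDeriv Ql =ᵐ[Ql] fun x ↦ g x * P.rnDeriv Ql x :=
    Measure.rnDeriv_withDensity_left hg.aemeasurable hg_ne_top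
  have hsmul : (Z⁻¹ • (P.withDensity g)).rnDeriv Ql
      =ᵐ[Ql] Z⁻¹ • (P.withDensity g).rnDeriv Ql :=
    Measure.rnDeriv_smul_left_of_ne_top _ _ (by simp [hZ0.ne'])
  have hf : (Z⁻¹ • (P.withDensity g)).rnDeriv Ql
      =ᵐ[Ql] fun x ↦ Z⁻¹ * (g x * P.rnDeriv Ql x) := by
    filter_upwards [hsmul, hwd] with x h1 h2
    rw [h1]; simp [h2]
  -- main integral bound
  have hmain : ∫⁻ x, ((Z⁻¹ • (P.withDensity g)).rnDeriv Ql x) ^ 2 ∂Ql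
      ≤ M₂ / (b * Z ^ 2) := by
    calc ∫⁻ x, ((Z⁻¹ • (P.withDensity g)).rnDeriv Ql x) ^ 2 ∂Ql
        = ∫⁻ x, (Z⁻¹ * (g x * P.rnDeriv Ql x)) ^ 2 ∂Ql := by
          refine lintegral_congr_ae ?_
          filter_upwards [hf] with x hx using by rw [hx]
      _ ≤ ∫⁻ x, Z⁻¹ ^ 2 * b⁻¹ * (P.rnDeriv Ql x * g x ^ 2) ∂Ql := by
          refine lintegral_mono_ae ?_
          filter_upwards [hr_le] with x hx
          calc (Z⁻¹ * (g x * P.rnDeriv Ql x)) ^ 2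
              = Z⁻¹ ^ 2 * (g x ^ 2 * (P.rnDeriv Ql x * P.rnDeriv Ql x)) := by ring
            _ ≤ Z⁻¹ ^ 2 * (g x ^ 2 * (b⁻¹ * P.rnDeriv Ql x)) := by gcongr
            _ = Z⁻¹ ^ 2 * b⁻¹ * (P.rnDeriv Ql x * g x ^ 2) := by ring
      _ = Z⁻¹ ^ 2 * b⁻¹ * ∫⁻ x, P.rnDeriv Ql x * g x ^ 2 ∂Ql := by
          rw [lintegral_const_mul']
          exact ENNReal.mul_ne_top (by simp [hZ0.ne']) (by simp [hb0])
      _ = Z⁻¹ ^ 2 * b⁻¹ * ∫⁻ x, g x ^ 2 ∂P := by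
          rw [lintegral_rnDeriv_mul hPQl (hg.pow_const 2).aemeasurable]
      _ = M₂ / (b * Z ^ 2) := by
          rw [hM₂, ENNReal.div_eq_inv_mul, ENNReal.mul_inv (Or.inl hb0)
            (Or.inl hbtop), ← ENNReal.inv_pow]
          ring
  exact tsub_le_tsub_right hmain 1
end

section
/- Under the Lasso setup with score condition ‖(1/n)Aᵀζ‖_∞ ≤ λ/2 and restricted strong convexity (1/n)‖AΔ‖₂² ≥ κ‖Δ‖₂² for all Δ with ‖Δ_{S^c}‖₁ ≤ 3‖Δ_S‖₁, the Lasso error Δ = ξ̂ − ξ* satisfies ‖Δ‖₂ ≤ 3√k·λ/κ and (1/n)‖AΔ‖₂² ≤ 9kλ²/κ. -/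
open Finset

/-- Lasso oracle bounds under score condition and restricted strong convexity:
`‖Δ‖₂ ≤ 3√k λ/κ` and `(1/n)‖AΔ‖₂² ≤ 9kλ²/κ`. -/
theorem lasso_oracle_bounds (n p k : ℕ) (hn : 0 < n)
    (A : Matrix (Fin n) (Fin p) ℝ) (ξstar ξhat : Fin p → ℝ) (ζ b : Fin n → ℝ)
    (hb : b = A.mulVec ξstar + ζ)
    (lam κ : ℝ) (hlam : 0 < lam) (hκ : 0 < κ)
    (hmin : ∀ ξ : Fin p → ℝ,
      (1 / (2 * (n : ℝ))) * (∑ i, (b i - A.mulVec ξhat i) ^ 2) +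
          lam * (∑ j, |ξhat j|)
        ≤ (1 / (2 * (n : ℝ))) * (∑ i, (b i - A.mulVec ξ i) ^ 2) +
          lam * (∑ j, |ξ j|))
    (S : Finset (Fin p)) (hS : ∀ j, j ∈ S ↔ ξstar j ≠ 0) (hk : S.card = k)
    (hscore : ∀ j, |(1 / (n : ℝ)) * ∑ i, A i j * ζ i| ≤ lam / 2)
    (hRSC : ∀ Δ : Fin p → ℝ,
      (∑ j ∈ Sᶜ, |Δ j|) ≤ 3 * ∑ j ∈ S, |Δ j| →
      κ * (∑ j, (Δ j) ^ 2) ≤ (1 / (n : ℝ)) * ∑ i, (A.mulVec Δ i) ^ 2) :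
    Real.sqrt (∑ j, (ξhat j - ξstar j) ^ 2) ≤ 3 * Real.sqrt k * lam / κ ∧
    (1 / (n : ℝ)) * (∑ i, (A.mulVec (ξhat - ξstar) i) ^ 2)
      ≤ 9 * k * lam ^ 2 / κ := by
  have hnpos : (0:ℝ) < n := by exact_mod_cast hn
  set Δ : Fin p → ℝ := fun j => ξhat j - ξstar j with hΔdef
  have hΔeq : ξhat - ξstar = Δ := rfl
  set u : Fin n → ℝ := A.mulVec Δ with hu
  set U : ℝ := ∑ i, (u i)^2 with hU
  set Z : ℝ := ∑ i, ζ i * u i with hZ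
  set S1 : ℝ := ∑ j ∈ S, |Δ j| with hS1
  set S2 : ℝ := ∑ j ∈ Sᶜ, |Δ j| with hS2
  set s2 : ℝ := ∑ j, (Δ j)^2 with hs2
  have hmv : ∀ i, A.mulVec ξhat i = A.mulVec ξstar i + u i := by
    intro i
    simp only [hu, hΔdef, Matrix.mulVec, dotProduct, mul_sub, Finset.sum_sub_distrib]
    ring
  have e1 : ∀ i, b i - A.mulVec ξhat i = ζ i - u i := by
    intro i; rw [hb, hmv i]; simp only [Pi.add_apply]; ring
  have e2 : ∀ i, b i - A.mulVec ξstar i = ζ i := by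
    intro i; rw [hb]; simp
  -- basic inequality
  have hbasic : (1/(2*(n:ℝ))) * U ≤ (1/(n:ℝ)) * Z
      + lam * ((∑ j, |ξstar j|) - (∑ j, |ξhat j|)) := by
    have h1 := hmin ξstar
    have expand : ∑ i, (b i - A.mulVec ξhat i)^2 = (∑ i, (ζ i)^2) - 2*Z + U := by
      have hpt : ∀ i, (b i - A.mulVec ξhat i)^2 = (ζ i)^2 - 2*(ζ i * u i) + (u i)^2 := by
        intro i; rw [e1 i]; ring
      rw [Finset.sum_congr rfl fun i _ => hpt i, Finset.sum_add_distrib,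
        Finset.sum_sub_distrib, ← Finset.mul_sum, hZ, hU]
    have h2 : ∑ i, (b i - A.mulVec ξstar i)^2 = ∑ i, (ζ i)^2 := by
      apply Finset.sum_congr rfl; intro i _; rw [e2]
    rw [expand, h2] at h1
    have h2n : (1:ℝ)/(n:ℝ) = 2 * (1/(2*(n:ℝ))) := by field_simp
    rw [h2n]
    nlinarith [h1]
  -- score bound
  have hswap : Z = ∑ j, (∑ i, A i j * ζ i) * Δ j := by
    simp only [hZ, hu, Matrix.mulVec, dotProduct, Finset.mul_sum, Finset.sum_mul]
    rw [Finset.sum_comm]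
    apply Finset.sum_congr rfl; intro j _
    apply Finset.sum_congr rfl; intro i _; ring
  have hZle : (1/(n:ℝ)) * Z ≤ (lam/2) * ∑ j, |Δ j| := by
    rw [hswap, Finset.mul_sum, Finset.mul_sum]
    apply Finset.sum_le_sum
    intro j _
    have h1 : (1/(n:ℝ)) * ((∑ i, A i j * ζ i) * Δ j)
        = ((1/(n:ℝ)) * ∑ i, A i j * ζ i) * Δ j := by ring
    rw [h1]
    calc ((1/(n:ℝ)) * ∑ i, A i j * ζ i) * Δ j
        ≤ |((1/(n:ℝ)) * ∑ i, A i j * ζ i) * Δ j| := le_abs_self _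
      _ = |(1/(n:ℝ)) * ∑ i, A i j * ζ i| * |Δ j| := abs_mul _ _
      _ ≤ (lam/2) * |Δ j| := mul_le_mul_of_nonneg_right (hscore j) (abs_nonneg _)
  have hsplit : ∑ j, |Δ j| = S1 + S2 := (Finset.sum_add_sum_compl S _).symm
  -- l1 difference bound
  have hTH : (∑ j, |ξstar j|) - (∑ j, |ξhat j|) ≤ S1 - S2 := by
    have hA : ∑ j, |ξstar j| = (∑ j ∈ S, |ξstar j|) + ∑ j ∈ Sᶜ, |ξstar j| :=
      (Finset.sum_add_sum_compl S _).symm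
    have hB : ∑ j, |ξhat j| = (∑ j ∈ S, |ξhat j|) + ∑ j ∈ Sᶜ, |ξhat j| :=
      (Finset.sum_add_sum_compl S _).symm
    have hon : (∑ j ∈ S, |ξstar j|) - (∑ j ∈ S, |ξhat j|) ≤ S1 := by
      rw [← Finset.sum_sub_distrib]
      apply Finset.sum_le_sum
      intro j _
      calc |ξstar j| - |ξhat j| ≤ |ξstar j - ξhat j| := abs_sub_abs_le_abs_sub _ _
        _ = |Δ j| := by rw [abs_sub_comm]
    have hoff : ∀ j ∈ Sᶜ, |ξstar j| - |ξhat j| = -|Δ j| := by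
      intro j hj
      have h0 : ξstar j = 0 := by
        by_contra h
        exact (Finset.mem_compl.mp hj) ((hS j).mpr h)
      simp [hΔdef, h0]
    have hoff' : (∑ j ∈ Sᶜ, |ξstar j|) - (∑ j ∈ Sᶜ, |ξhat j|) = -S2 := by
      rw [← Finset.sum_sub_distrib, hS2, ← Finset.sum_neg_distrib]
      exact Finset.sum_congr rfl hoff
    linarith
  have hUnn : 0 ≤ U := Finset.sum_nonneg fun i _ => sq_nonneg _
  have hS1nn : 0 ≤ S1 := Finset.sum_nonneg fun j _ => abs_nonneg _
  have hS2nn : 0 ≤ S2 := Finset.sum_nonneg fun j _ => abs_nonneg _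
  -- key inequality
  have hkey : (1/(2*(n:ℝ))) * U ≤ (3*lam/2) * S1 - (lam/2) * S2 := by
    have h3 : lam * ((∑ j, |ξstar j|) - (∑ j, |ξhat j|)) ≤ lam * (S1 - S2) :=
      mul_le_mul_of_nonneg_left hTH hlam.le
    rw [hsplit] at hZle
    nlinarith
  -- cone condition
  have hcone : S2 ≤ 3 * S1 := by
    have h : (lam/2) * S2 ≤ (lam/2) * (3 * S1) := by
      have : (1/(2*(n:ℝ))) * U ≥ 0 := mul_nonneg (by positivity) hUnn
      nlinarith
    exact le_of_mul_le_mul_left h (by linarith)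
  have hRSC' : κ * s2 ≤ (1/(n:ℝ)) * U := hRSC Δ hcone
  have hU3 : (1/(n:ℝ)) * U ≤ 3 * lam * S1 := by
    have h2n : (1:ℝ)/(n:ℝ) = 2 * (1/(2*(n:ℝ))) := by field_simp
    rw [h2n]
    nlinarith [mul_nonneg hlam.le hS2nn]
  -- Cauchy-Schwarz
  have hs2nn : 0 ≤ s2 := Finset.sum_nonneg fun j _ => sq_nonneg _
  have hCS : S1^2 ≤ (k:ℝ) * s2 := by
    have hcs : (∑ j ∈ S, (1:ℝ) * |Δ j|)^2 ≤ (∑ j ∈ S, (1:ℝ)^2) * ∑ j ∈ S, |Δ j|^2 :=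
      Finset.sum_mul_sq_le_sq_mul_sq S _ _
    simp only [one_mul, one_pow, Finset.sum_const, nsmul_eq_mul, mul_one, hk] at hcs
    calc S1^2 ≤ (k:ℝ) * ∑ j ∈ S, |Δ j|^2 := hcs
      _ ≤ (k:ℝ) * s2 := by
          apply mul_le_mul_of_nonneg_left _ (Nat.cast_nonneg k)
          rw [hs2]
          calc ∑ j ∈ S, |Δ j|^2 = ∑ j ∈ S, (Δ j)^2 := by
                apply Finset.sum_congr rfl; intro j _; exact sq_abs _
            _ ≤ ∑ j, (Δ j)^2 :=
                Finset.sum_le_sum_of_subset_of_nonneg (Finset.subset_univ S)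
                  (fun j _ _ => sq_nonneg _)
  set r : ℝ := Real.sqrt s2 with hr
  set rk : ℝ := Real.sqrt k with hrk
  have hrnn : 0 ≤ r := Real.sqrt_nonneg _
  have hrknn : 0 ≤ rk := Real.sqrt_nonneg _
  have hr2 : r^2 = s2 := Real.sq_sqrt hs2nn
  have hrk2 : rk^2 = (k:ℝ) := Real.sq_sqrt (Nat.cast_nonneg k)
  have hS1r : S1 ≤ rk * r := by
    have h1 : rk * r = Real.sqrt ((k:ℝ) * s2) := (Real.sqrt_mul (Nat.cast_nonneg k) s2).symm
    rw [h1, ← Real.sqrt_sq hS1nn]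
    exact Real.sqrt_le_sqrt hCS
  have hmain : κ * r^2 ≤ 3 * lam * (rk * r) := by
    rw [hr2]
    calc κ * s2 ≤ (1/(n:ℝ)) * U := hRSC'
      _ ≤ 3 * lam * S1 := hU3
      _ ≤ 3 * lam * (rk * r) :=
          mul_le_mul_of_nonneg_left hS1r (by positivity)
  have goal1 : r ≤ 3 * rk * lam / κ := by
    rcases eq_or_lt_of_le hrnn with h | h
    · rw [← h]; positivity
    · rw [le_div_iff₀ hκ]
      have h1 : (κ * r) * r ≤ (3 * rk * lam) * r := by
        calc (κ * r) * r = κ * r ^ 2 := by ring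
          _ ≤ 3 * lam * (rk * r) := hmain
          _ = (3 * rk * lam) * r := by ring
      have h2 := le_of_mul_le_mul_right h1 h
      linarith
  constructor
  · exact goal1
  · rw [hΔeq]
    calc (1/(n:ℝ)) * U ≤ 3 * lam * S1 := hU3
      _ ≤ 3 * lam * (rk * r) :=
          mul_le_mul_of_nonneg_left hS1r (by positivity)
      _ ≤ 3 * lam * (rk * (3 * rk * lam / κ)) := by
          apply mul_le_mul_of_nonneg_left _ (by positivity)
          exact mul_le_mul_of_nonneg_left goal1 hrknn
      _ = 9 * (rk^2) * lam^2 / κ := by ring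
      _ = 9 * k * lam^2 / κ := by rw [hrk2]
end
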